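/- arXiv:2306.12855 — 2 statements merged into one kernel-verified Lean document; each statement's English description precedes it below -/
import Mathlib

section
/- Let F(t) = At² + Bt + C be an integer quadratic polynomial with A > 0 whose discriminant B² − 4AC equals −η² for some integer η. Then F(t) is a sum of two squares for every integer t with F(t) ≥ 0. -/
/-!
Completing the square gives `4A · F(t) = (2At + B)² + η²`. Since `4A = (2p)² + (2q)²` is a
nonzero sum of two squares, cancelling it preserves the criterion "every prime `≡ 3 mod 4`
occurs to an even power", so `F(t)` is a sum of two squares as well.
-/

theorem Nat.eq_sq_add_sq_of_mul {a f : ℕ} (ha : a ≠ 0)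
    (haq : ∃ x y, a = x ^ 2 + y ^ 2) (hafq : ∃ x y, a * f = x ^ 2 + y ^ 2) :
    ∃ x y, f = x ^ 2 + y ^ 2 := by
  rcases eq_or_ne f 0 with rfl | hf
  · exact ⟨0, 0, rfl⟩
  rw [Nat.eq_sq_add_sq_iff] at haq hafq ⊢
  intro q hq hq3
  have : Fact q.Prime := ⟨Nat.prime_of_mem_primeFactors hq⟩
  have hprod := hafq q (Nat.primeFactors_mul ha hf ▸ Finset.mem_union_right _ hq) hq3
  rw [padicValNat.mul ha hf] at hprod
  by_cases hqa : q ∣ a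
  · exact (Nat.even_add.mp hprod).mp (haq q (Nat.mem_primeFactors.mpr ⟨this.out, hqa, ha⟩) hq3)
  · rwa [padicValNat.eq_zero_of_not_dvd hqa, zero_add] at hprod

theorem Int.natCast_eq_sq_add_sq_iff {n : ℕ} :
    (∃ x y : ℤ, (n : ℤ) = x ^ 2 + y ^ 2) ↔ ∃ x y : ℕ, n = x ^ 2 + y ^ 2 := by
  constructor
  · rintro ⟨x, y, h⟩
    refine ⟨x.natAbs, y.natAbs, ?_⟩
    rw [← Int.natAbs_pow_two x, ← Int.natAbs_pow_two y] at h
    exact_mod_cast h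
  · rintro ⟨x, y, h⟩
    exact ⟨x, y, by exact_mod_cast h⟩

theorem Int.eq_sq_add_sq_of_mul {a f : ℤ} (ha : a ≠ 0)
    (haq : ∃ x y, a = x ^ 2 + y ^ 2) (hafq : ∃ x y, a * f = x ^ 2 + y ^ 2) :
    ∃ x y, f = x ^ 2 + y ^ 2 := by
  have ha_pos : 0 < a := by
    obtain ⟨x, y, rfl⟩ := haq
    exact ha.symm.lt_of_le (by positivity)
  have hf_nonneg : 0 ≤ f := by
    obtain ⟨x, y, hxy⟩ := hafq
    exact nonneg_of_mul_nonneg_right (hxy ▸ by positivity) ha_pos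
  lift a to ℕ using ha_pos.le
  lift f to ℕ using hf_nonneg
  rw [← Nat.cast_mul, Int.natCast_eq_sq_add_sq_iff] at hafq
  rw [Int.natCast_eq_sq_add_sq_iff] at haq ⊢
  exact Nat.eq_sq_add_sq_of_mul (by exact_mod_cast ha) haq hafq

theorem quadratic_neg_square_disc_sum_two_squares (A B C : ℤ) (hA : 0 < A)
    (hdisc : ∃ η : ℤ, B ^ 2 - 4 * A * C = -η ^ 2)
    (hAsq : ∃ p q : ℤ, A = p ^ 2 + q ^ 2) :
    ∀ t : ℤ, 0 ≤ A * t ^ 2 + B * t + C →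
      ∃ x y : ℤ, A * t ^ 2 + B * t + C = x ^ 2 + y ^ 2 := by
  intro t _
  obtain ⟨η, hη⟩ := hdisc
  obtain ⟨p, q, hpq⟩ := hAsq
  refine Int.eq_sq_add_sq_of_mul (a := 4 * A) (by positivity) ⟨2 * p, 2 * q, by rw [hpq]; ring⟩
    ⟨2 * A * t + B, η, ?_⟩
  linear_combination -hη
end

section
/- Let q ≥ 1 and let a, b, c be admissible residue classes mod q (i.e., each is a value of x² + y² mod q). Then there exist lifts a₃, b₃, c₃ of a, b, c to residue classes mod 4q² with 0 < a₃, b₃, c₃ ≤ q², each admissible mod 4q². -/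
lemma admissible_lift_one (q : ℕ) (hq : 1 ≤ q) (a : ℤ)
    (ha : ∃ x y : ℤ, x ^ 2 + y ^ 2 ≡ a [ZMOD (q : ℤ)]) :
    ∃ a₃ : ℤ, 0 < a₃ ∧ a₃ ≤ (q : ℤ) ^ 2 ∧ a₃ ≡ a [ZMOD (q : ℤ)] ∧
      ∃ x y : ℤ, x ^ 2 + y ^ 2 ≡ a₃ [ZMOD (4 * (q : ℤ) ^ 2)] := by
  obtain ⟨x, y, hxy⟩ := ha
  have hq0 : 0 < q := hq
  set x₀ := x.bmod q with hx0
  set y₀ := y.bmod q with hy0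
  have hxc : x₀ ≡ x [ZMOD (q : ℤ)] := Int.bmod_emod
  have hyc : y₀ ≡ y [ZMOD (q : ℤ)] := Int.bmod_emod
  have hna : x₀ ^ 2 + y₀ ^ 2 ≡ a [ZMOD (q : ℤ)] :=
    ((hxc.pow 2).add (hyc.pow 2)).trans hxy
  -- bounds
  have hb1 : -((q : ℤ) / 2) ≤ x₀ := Int.le_bmod hq0
  have hb2 : x₀ < ((q : ℤ) + 1) / 2 := Int.bmod_lt hq0
  have hb3 : -((q : ℤ) / 2) ≤ y₀ := Int.le_bmod hq0
  have hb4 : y₀ < ((q : ℤ) + 1) / 2 := Int.bmod_lt hq0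
  have hd1 : 2 * ((q : ℤ) / 2) ≤ (q : ℤ) := Int.mul_ediv_add_emod (q : ℤ) 2 ▸ by
    have := Int.emod_nonneg (q : ℤ) (by norm_num : (2:ℤ) ≠ 0); omega
  have hd2 : 2 * (((q : ℤ) + 1) / 2) ≤ (q : ℤ) + 1 := by
    have := Int.emod_nonneg ((q : ℤ) + 1) (by norm_num : (2:ℤ) ≠ 0)
    have h2 := Int.mul_ediv_add_emod ((q : ℤ) + 1) 2
    omega
  have habs : ∀ z : ℤ, -((q : ℤ) / 2) ≤ z → z < ((q : ℤ) + 1) / 2 →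
      4 * z ^ 2 ≤ (q : ℤ) ^ 2 := by
    intro z h1 h2
    have h3 : 2 * z ≤ (q : ℤ) := by omega
    have h4 : -(q : ℤ) ≤ 2 * z := by omega
    nlinarith
  have h1 : 4 * x₀ ^ 2 ≤ (q : ℤ) ^ 2 := habs _ hb1 hb2
  have h2 : 4 * y₀ ^ 2 ≤ (q : ℤ) ^ 2 := habs _ hb3 hb4
  have hnle : x₀ ^ 2 + y₀ ^ 2 ≤ (q : ℤ) ^ 2 := by nlinarith
  have hn0 : 0 ≤ x₀ ^ 2 + y₀ ^ 2 := by positivity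
  rcases eq_or_lt_of_le hn0 with h0 | hpos
  · -- n = 0, so a ≡ 0 mod q; take q²
    refine ⟨(q : ℤ) ^ 2, by positivity, le_refl _, ?_,
      (q : ℤ), 0, by norm_num [Int.ModEq]⟩
    have h0' : (0 : ℤ) ≡ a [ZMOD (q : ℤ)] := h0 ▸ hna
    have hsq : ((q : ℤ) ^ 2) ≡ 0 [ZMOD (q : ℤ)] :=
      (Int.modEq_zero_iff_dvd).mpr ⟨(q : ℤ), by ring⟩
    exact hsq.trans h0'
  · exact ⟨x₀ ^ 2 + y₀ ^ 2, hpos, hnle, hna, x₀, y₀, Int.ModEq.refl _⟩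

theorem admissible_lifts_exist (q : ℕ) (hq : 1 ≤ q) (a b c : ℤ)
    (ha : ∃ x y : ℤ, x ^ 2 + y ^ 2 ≡ a [ZMOD (q : ℤ)])
    (hb : ∃ x y : ℤ, x ^ 2 + y ^ 2 ≡ b [ZMOD (q : ℤ)])
    (hc : ∃ x y : ℤ, x ^ 2 + y ^ 2 ≡ c [ZMOD (q : ℤ)]) :
    ∃ a₃ b₃ c₃ : ℤ,
      (0 < a₃ ∧ a₃ ≤ (q : ℤ) ^ 2 ∧ a₃ ≡ a [ZMOD (q : ℤ)] ∧
        ∃ x y : ℤ, x ^ 2 + y ^ 2 ≡ a₃ [ZMOD (4 * (q : ℤ) ^ 2)]) ∧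
      (0 < b₃ ∧ b₃ ≤ (q : ℤ) ^ 2 ∧ b₃ ≡ b [ZMOD (q : ℤ)] ∧
        ∃ x y : ℤ, x ^ 2 + y ^ 2 ≡ b₃ [ZMOD (4 * (q : ℤ) ^ 2)]) ∧
      (0 < c₃ ∧ c₃ ≤ (q : ℤ) ^ 2 ∧ c₃ ≡ c [ZMOD (q : ℤ)] ∧
        ∃ x y : ℤ, x ^ 2 + y ^ 2 ≡ c₃ [ZMOD (4 * (q : ℤ) ^ 2)]) := by
  obtain ⟨a₃, ha₃⟩ := admissible_lift_one q hq a ha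
  obtain ⟨b₃, hb₃⟩ := admissible_lift_one q hq b hb
  obtain ⟨c₃, hc₃⟩ := admissible_lift_one q hq c hc
  exact ⟨a₃, b₃, c₃, ha₃, hb₃, hc₃⟩
end
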